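/- arXiv:math/0611947 — 4 statements merged into one kernel-verified Lean document; each statement's English description precedes it below -/
import Mathlib

section
/- Let x_1, ..., x_n be unit vectors in the n-dimensional real Euclidean space ℝ^n, and let λ_1, ..., λ_n denote the eigenvalues of the Gram matrix XX* = [⟨x_i, x_j⟩] (where X is the n×n matrix whose rows are the vectors x_1, ..., x_n). Then sup over unit vectors y in ℝ^n of |⟨x_1,y⟩ · ⟨x_2,y⟩ ⋯ ⟨x_n,y⟩| is at least (∏_{j=1}^n λ_j)^{1/2} · n^{-n/2}. -/
/-!
Gram–Schmidt applied to `x` gives an orthonormal basis `e` in which `x i = ∑_{j ≤ i} m j i • e j`,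
so `det G = (∏ m i i)²`. Choosing signs `ε j = ±1` greedily in increasing order makes
`|∑_{j ≤ i} ε j * m j i| ≥ |m i i|` for every `i`; the unit vector `y = n^{-1/2} ∑ ε j • e j`
then has `|⟪x i, y⟫| ≥ n^{-1/2} |m i i|`, and multiplying over `i` gives the bound.
-/

open Matrix Finset
open scoped RealInnerProductSpace

theorem exists_sign_abs_le_abs_mul_add {R : Type*} [CommRing R] [LinearOrder R]
    [IsStrictOrderedRing R] (a s : R) : ∃ ε : R, |ε| = 1 ∧ |a| ≤ |ε * a + s| := by
  rcases le_total 0 (a * s) with h | h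
  · refine ⟨1, abs_one, sq_le_sq.mp ?_⟩
    nlinarith
  · refine ⟨-1, by simp, sq_le_sq.mp ?_⟩
    nlinarith

theorem Matrix.IsUpperTriangular.exists_abs_eq_one_abs_diag_le_abs_vecMul
    {ι R : Type*} [Fintype ι] [LinearOrder ι] [CommRing R] [LinearOrder R] [IsStrictOrderedRing R]
    {M : Matrix ι ι R} (hM : M.IsUpperTriangular) :
    ∃ ε : ι → R, (∀ i, |ε i| = 1) ∧ ∀ j, |M j j| ≤ |(ε ᵥ* M) j| := by
  classical
  -- Adding an index `a` above all of `t` leaves the sums for `j ∈ t` unchanged,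
  -- since `M a j = 0` for `j < a`.
  suffices ∀ t : Finset ι, ∃ ε : ι → R, (∀ i, |ε i| = 1) ∧
      ∀ j ∈ t, |M j j| ≤ |∑ i ∈ t, ε i * M i j| by
    obtain ⟨ε, hε, hdiag⟩ := this univ
    exact ⟨ε, hε, fun j => hdiag j (mem_univ j)⟩
  intro t
  induction t using Finset.induction_on_max with
  | empty => exact ⟨fun _ => 1, fun _ => abs_one, by simp⟩
  | insert a t hlt ih =>
    obtain ⟨ε, hε, hdiag⟩ := ih
    have hat : a ∉ t := fun ha => lt_irrefl a (hlt a ha)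
    obtain ⟨c, hc, hca⟩ := exists_sign_abs_le_abs_mul_add (M a a) (∑ i ∈ t, ε i * M i a)
    have hupd : ∀ j, ∑ i ∈ t, Function.update ε a c i * M i j = ∑ i ∈ t, ε i * M i j :=
      fun j => sum_congr rfl fun i hi => by rw [Function.update_of_ne (hlt i hi).ne]
    refine ⟨Function.update ε a c, ?_, ?_⟩
    · intro i
      rcases eq_or_ne i a with rfl | hi
      · simpa using hc
      · simpa [Function.update_of_ne hi] using hε i
    · intro j hj
      rw [sum_insert hat, Function.update_self, hupd]
      rcases mem_insert.mp hj with rfl | hj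
      · exact hca
      · rw [hM (hlt j hj), mul_zero, zero_add]
        exact hdiag j hj

variable {ι E : Type*} [Fintype ι] [NormedAddCommGroup E] [InnerProductSpace ℝ E]

theorem OrthonormalBasis.det_gram_eq_det_sq [DecidableEq ι] (e : OrthonormalBasis ι ℝ E)
    (x : ι → E) : (gram ℝ x).det = e.toBasis.det x ^ 2 := by
  rw [gram_eq_conjTranspose_mul e x, det_mul, det_conjTranspose, Module.Basis.det_apply]
  simp only [star_trivial, sq]
  rfl

theorem OrthonormalBasis.inner_repr_symm (e : OrthonormalBasis ι ℝ E) (v : EuclideanSpace ℝ ι)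
    (x : E) : ⟪x, e.repr.symm v⟫ = ∑ i, v i * e.repr x i := by
  simp only [← e.sum_repr_symm, inner_sum, real_inner_smul_right, e.repr_apply_apply,
    real_inner_comm]

theorem bddAbove_range_abs_prod_inner_sphere (x : ι → E) :
    BddAbove (Set.range fun y : Metric.sphere (0 : E) 1 => |∏ i, ⟪x i, (y : E)⟫|) := by
  refine ⟨∏ i, ‖x i‖, ?_⟩
  rintro _ ⟨y, rfl⟩
  dsimp only
  rw [abs_prod]
  refine prod_le_prod (fun i _ => abs_nonneg _) fun i _ => ?_
  simpa [norm_eq_of_mem_sphere y] using abs_real_inner_le_norm (x i) y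

theorem OrthonormalBasis.exists_norm_eq_one_abs_det_le [LinearOrder ι] [Nonempty ι]
    (e : OrthonormalBasis ι ℝ E) {x : ι → E} (hx : (e.toBasis.toMatrix x).IsUpperTriangular) :
    ∃ y : E, ‖y‖ = 1 ∧
      |e.toBasis.det x| ≤ √(Fintype.card ι) ^ Fintype.card ι * |∏ i, ⟪x i, y⟫| := by
  classical
  obtain ⟨ε, hε, hdiag⟩ := hx.exists_abs_eq_one_abs_diag_le_abs_vecMul
  set r := √(Fintype.card ι : ℝ)
  have hr : 0 < r := by simp [r, Fintype.card_pos]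
  set y := r⁻¹ • e.repr.symm (WithLp.toLp 2 ε)
  have hdiag_le (i : ι) : |e.toBasis.toMatrix x i i| ≤ r * |⟪x i, y⟫| := by
    have : ⟪x i, y⟫ = r⁻¹ * (ε ᵥ* e.toBasis.toMatrix x) i := by
      rw [real_inner_smul_right, e.inner_repr_symm]
      rfl
    rw [this, abs_mul, abs_inv, abs_of_pos hr, mul_inv_cancel_left₀ hr.ne']
    exact hdiag i
  refine ⟨y, ?_, ?_⟩
  · have hnorm : ‖WithLp.toLp 2 ε‖ = r := by simp [EuclideanSpace.norm_eq, r, hε]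
    rw [norm_smul, LinearIsometryEquiv.norm_map, hnorm, norm_inv, Real.norm_of_nonneg hr.le,
      inv_mul_cancel₀ hr.ne']
  · calc |e.toBasis.det x| = ∏ i, |e.toBasis.toMatrix x i i| := by
          rw [Module.Basis.det_apply, det_of_isUpperTriangular hx, abs_prod]
      _ ≤ ∏ i, r * |⟪x i, y⟫| := prod_le_prod (fun i _ => abs_nonneg _) fun i _ => hdiag_le i
      _ = r ^ Fintype.card ι * |∏ i, ⟪x i, y⟫| := by
          rw [prod_mul_distrib, prod_const, card_univ, abs_prod]

theorem stmt0_general (n : ℕ) (hn : 0 < n) (x : Fin n → EuclideanSpace ℝ (Fin n))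
    (G : Matrix (Fin n) (Fin n) ℝ)
    (hGdef : G = Matrix.of fun i j => (inner ℝ (x i) (x j) : ℝ))
    (hG : G.IsHermitian) :
    (⨆ y : Metric.sphere (0 : EuclideanSpace ℝ (Fin n)) 1,
        |∏ i, (inner ℝ (x i) (y : EuclideanSpace ℝ (Fin n)) : ℝ)|) ≥
      Real.sqrt (∏ j, hG.eigenvalues j) * (n : ℝ) ^ (-(n : ℝ) / 2) := by
  have hcard : Module.finrank ℝ (EuclideanSpace ℝ (Fin n)) = Fintype.card (Fin n) := by simp
  set e := InnerProductSpace.gramSchmidtOrthonormalBasis hcard x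
  have : Nonempty (Fin n) := ⟨⟨0, hn⟩⟩
  obtain ⟨y, hy, hdet⟩ := e.exists_norm_eq_one_abs_det_le
    (InnerProductSpace.gramSchmidtOrthonormalBasis_inv_isUpperTriangular hcard x)
  have hsqrt : √(∏ j, hG.eigenvalues j) = |e.toBasis.det x| := by
    have hprod : ∏ j, hG.eigenvalues j = G.det := by simp [hG.det_eq_prod_eigenvalues]
    rw [hprod, hGdef, ← gram, e.det_gram_eq_det_sq, Real.sqrt_sq_eq_abs]
  have hpow : (n : ℝ) ^ (-(n : ℝ) / 2) = (√n ^ n)⁻¹ := by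
    rw [neg_div, Real.rpow_neg n.cast_nonneg, Real.sqrt_eq_rpow, ← Real.rpow_natCast,
      ← Real.rpow_mul n.cast_nonneg, one_div_mul_eq_div]
  have hn' : 0 < √(n : ℝ) ^ n := by positivity
  calc √(∏ j, hG.eigenvalues j) * (n : ℝ) ^ (-(n : ℝ) / 2)
      ≤ |∏ i, ⟪x i, y⟫| := by
        rw [hsqrt, hpow, ← div_eq_mul_inv, div_le_iff₀' hn']
        simpa using hdet
    _ ≤ _ := le_ciSup (bddAbove_range_abs_prod_inner_sphere x) ⟨y, by simpa using hy⟩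

/-- Theorem 1: if `x 1, ..., x n` are unit vectors in `ℝ^n` and `λ_1, ..., λ_n` are the
eigenvalues of the Gram matrix `[⟨x i, x j⟩]`, then the supremum over unit vectors `y` of
`|⟨x 1, y⟩ ⋯ ⟨x n, y⟩|` is at least `(∏ λ_j)^{1/2} · n^{-n/2}`. -/
theorem stmt0 (n : ℕ) (hn : 0 < n) (x : Fin n → EuclideanSpace ℝ (Fin n))
    (hx : ∀ i, ‖x i‖ = 1)
    (G : Matrix (Fin n) (Fin n) ℝ)
    (hGdef : G = Matrix.of fun i j => (inner ℝ (x i) (x j) : ℝ))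
    (hG : G.IsHermitian) :
    (⨆ y : Metric.sphere (0 : EuclideanSpace ℝ (Fin n)) 1,
        |∏ i, (inner ℝ (x i) (y : EuclideanSpace ℝ (Fin n)) : ℝ)|) ≥
      Real.sqrt (∏ j, hG.eigenvalues j) * (n : ℝ) ^ (-(n : ℝ) / 2) :=
  stmt0_general n hn x G hGdef hG
end

section
/- Let E be an n-dimensional ellipsoid in ℝ^n (not necessarily centered at the origin), i.e. E = c + A[B^n] for some point c ∈ ℝ^n and some linear transformation A of full rank, and suppose E has n-dimensional Lebesgue volume V·b_n. Then E intersects the set H_V = {z = (z_1,...,z_n) ∈ ℝ^n : |∏_{j=1}^n z_j| ≥ V · n^{-n/2}}, i.e. E ∩ H_V ≠ ∅. -/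
/-!
Gram–Schmidt applied to the rows of `A` gives `A = L Q` with `Q` orthogonal and `L` lower
triangular, so `E = c + L[Bⁿ]` and `|∏ⱼ Lⱼⱼ| = |det A| ≥ V` by the volume hypothesis. Take
`z = c + L v` with every `|vₖ| = n^{-1/2}`, so that `‖v‖ ≤ 1`, choosing the signs of `v₁, v₂, …`
in turn so that the diagonal term `Lⱼⱼ vⱼ` never cancels against the rest of `zⱼ`. Then
`|zⱼ| ≥ n^{-1/2} |Lⱼⱼ|` for every `j`, and multiplying gives `|∏ⱼ zⱼ| ≥ n^{-n/2} V`.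
-/

open MeasureTheory Finset Matrix

theorem abs_mul_le_abs_add_ite_mul (x a : ℝ) {t : ℝ} (ht : 0 ≤ t) :
    t * |a| ≤ |x + (if 0 ≤ x * a then t else -t) * a| := by
  have hta : t * |a| = |t * a| := by rw [abs_mul, abs_of_nonneg ht]
  rw [hta, ← sq_le_sq]
  split_ifs with h
  · nlinarith [mul_nonneg ht h]
  · nlinarith [mul_nonneg ht (neg_nonneg.2 (not_le.1 h).le)]

theorem Real.inv_sqrt_pow (x : ℝ) (hx : 0 ≤ x) (n : ℕ) : (√x)⁻¹ ^ n = x ^ (-(n : ℝ) / 2) := by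
  rw [Real.sqrt_eq_rpow, ← Real.rpow_neg hx, ← Real.rpow_mul_natCast hx]
  ring_nf

section Signs

variable {ι : Type*} [Fintype ι] [LinearOrder ι]

noncomputable def greedySigns (L : Matrix ι ι ℝ) (s : ι → ℝ) (t : ℝ) : ι → ℝ :=
  wellFounded_lt.fix fun j v =>
    if 0 ≤ (s j + ∑ k ∈ ({k | k < j} : Finset ι).attach, L j k * v k (mem_filter.1 k.2).2) * L j j
    then t else -t

theorem greedySigns_apply (L : Matrix ι ι ℝ) (s : ι → ℝ) (t : ℝ) (j : ι) :
    greedySigns L s t j =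
      if 0 ≤ (s j + ∑ k with k < j, L j k * greedySigns L s t k) * L j j then t else -t := by
  unfold greedySigns
  rw [WellFounded.fix_eq]
  exact congrArg (fun x => if 0 ≤ (s j + x) * L j j then t else -t) <|
    sum_attach _ fun k => L j k * greedySigns L s t k

theorem Matrix.IsLowerTriangular.mulVec_apply {L : Matrix ι ι ℝ} (hL : L.IsLowerTriangular)
    (v : ι → ℝ) (j : ι) : (L *ᵥ v) j = ∑ k with k < j, L j k * v k + L j j * v j := by
  rw [mulVec, dotProduct, ← sum_filter_add_sum_filter_not univ (· < j), add_right_inj]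
  refine sum_eq_single_of_mem j (by simp) fun k hk hkj => ?_
  have hjk : j < k := lt_of_le_of_ne (not_lt.1 (mem_filter.1 hk).2) (Ne.symm hkj)
  rw [hL (OrderDual.toDual_lt_toDual.2 hjk), zero_mul]

theorem Matrix.IsLowerTriangular.exists_abs_eq_forall_mul_abs_le {L : Matrix ι ι ℝ}
    (hL : L.IsLowerTriangular) (s : ι → ℝ) {t : ℝ} (ht : 0 ≤ t) :
    ∃ v : ι → ℝ, (∀ k, |v k| = t) ∧ ∀ j, t * |L j j| ≤ |s j + (L *ᵥ v) j| := by
  refine ⟨greedySigns L s t, fun k => ?_, fun j => ?_⟩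
  · rw [greedySigns_apply]; split_ifs <;> simp [abs_of_nonneg ht]
  · rw [hL.mulVec_apply, ← add_assoc, greedySigns_apply L s t j, mul_comm (L j j)]
    exact abs_mul_le_abs_add_ite_mul _ _ ht

end Signs

section Euclidean

variable {ι : Type*} [Fintype ι]

theorem EuclideanSpace.norm_le_one_of_forall_abs_eq (v : EuclideanSpace ℝ ι)
    (hv : ∀ k, |v k| = (√(Fintype.card ι))⁻¹) : ‖v‖ ≤ 1 := by
  rw [EuclideanSpace.norm_eq, Real.sqrt_le_one]
  simp only [Real.norm_eq_abs, hv, inv_pow, Real.sq_sqrt (Nat.cast_nonneg _), sum_const,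
    card_univ, nsmul_eq_mul]
  exact mul_inv_le_one

theorem Matrix.mul_toMatrix_orthonormalBasis_apply (A : Matrix ι ι ℝ)
    (q : OrthonormalBasis ι ℝ (EuclideanSpace ℝ ι)) (j k : ι) :
    (A * (EuclideanSpace.basisFun ι ℝ).toBasis.toMatrix q) j k =
      inner ℝ (q k) (WithLp.toLp 2 (A j)) := by
  simp [mul_apply, Module.Basis.toMatrix_apply, PiLp.inner_apply]

theorem Matrix.exists_orthonormalBasis_isLowerTriangular_mul_toMatrix [LinearOrder ι]
    [LocallyFiniteOrderBot ι] (A : Matrix ι ι ℝ) :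
    ∃ q : OrthonormalBasis ι ℝ (EuclideanSpace ℝ ι),
      (A * (EuclideanSpace.basisFun ι ℝ).toBasis.toMatrix q).IsLowerTriangular := by
  refine ⟨InnerProductSpace.gramSchmidtOrthonormalBasis (by simp) fun j => WithLp.toLp 2 (A j),
    fun j k hjk => ?_⟩
  rw [mul_toMatrix_orthonormalBasis_apply]
  exact InnerProductSpace.gramSchmidtOrthonormalBasis_inv_triangular _ _
    (OrderDual.toDual_lt_toDual.1 hjk)

variable [DecidableEq ι]

theorem Matrix.toEuclideanLin_repr_symm (A : Matrix ι ι ℝ)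
    (q : OrthonormalBasis ι ℝ (EuclideanSpace ℝ ι)) (v : EuclideanSpace ℝ ι) :
    toEuclideanLin A (q.repr.symm v) =
      WithLp.toLp 2 ((A * (EuclideanSpace.basisFun ι ℝ).toBasis.toMatrix q) *ᵥ v) := by
  rw [toLpLin_apply, ← mulVec_mulVec]
  congr 2
  ext i
  simp [← q.sum_repr_symm, mulVec, dotProduct, Module.Basis.toMatrix_apply, mul_comm]

theorem Matrix.abs_det_mul_toMatrix_orthonormalBasis (A : Matrix ι ι ℝ)
    (q : OrthonormalBasis ι ℝ (EuclideanSpace ℝ ι)) :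
    |(A * (EuclideanSpace.basisFun ι ℝ).toBasis.toMatrix q).det| = |A.det| := by
  rw [det_mul, abs_mul, ← Module.Basis.det_apply]
  rcases (EuclideanSpace.basisFun ι ℝ).det_to_matrix_orthonormalBasis_real q with h | h <;> simp [h]

theorem volume_add_image_toEuclideanLin (A : Matrix ι ι ℝ) (c : EuclideanSpace ℝ ι)
    (s : Set (EuclideanSpace ℝ ι)) :
    volume ((c + ·) '' (toEuclideanLin A '' s)) = ENNReal.ofReal |A.det| * volume s := by
  rw [Set.image_add_left, measure_preimage_add, Measure.addHaar_image_linearMap,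
    LinearMap.det_toLpLin]

end Euclidean

theorem stmt2_general (n : ℕ) (A : Matrix (Fin n) (Fin n) ℝ)
    (c : EuclideanSpace ℝ (Fin n)) (E : Set (EuclideanSpace ℝ (Fin n)))
    (hE : E = (fun v => c + v) '' (Matrix.toEuclideanLin A '' Metric.closedBall 0 1))
    (V : ℝ)
    (hV : volume E =
      ENNReal.ofReal V * volume (Metric.closedBall (0 : EuclideanSpace ℝ (Fin n)) 1)) :
    (E ∩ {z : EuclideanSpace ℝ (Fin n) |
      V * (n : ℝ) ^ (-(n : ℝ) / 2) ≤ |∏ j, z j|}).Nonempty := by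
  have hVA : V ≤ |A.det| := by
    rw [hE, volume_add_image_toEuclideanLin, ENNReal.mul_left_inj
      (Metric.measure_closedBall_pos volume 0 one_pos).ne' measure_closedBall_lt_top.ne] at hV
    exact (ENNReal.ofReal_le_ofReal_iff (abs_nonneg _)).1 hV.ge
  obtain ⟨q, hL⟩ := A.exists_orthonormalBasis_isLowerTriangular_mul_toMatrix
  set L := A * (EuclideanSpace.basisFun (Fin n) ℝ).toBasis.toMatrix q
  obtain ⟨v, hv, hLv⟩ := hL.exists_abs_eq_forall_mul_abs_le (fun j => c j)
    (t := (√n)⁻¹) (by positivity)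
  refine ⟨c + toEuclideanLin A (q.repr.symm (WithLp.toLp 2 v)), ?_, ?_⟩
  · rw [hE]
    refine ⟨_, ⟨_, ?_, rfl⟩, rfl⟩
    rw [Metric.mem_closedBall, dist_zero_right, LinearIsometryEquiv.norm_map]
    exact EuclideanSpace.norm_le_one_of_forall_abs_eq _ (by simpa using hv)
  · rw [Set.mem_ofPred_eq, A.toEuclideanLin_repr_symm q, ← Real.inv_sqrt_pow _ n.cast_nonneg]
    calc V * (√n)⁻¹ ^ n ≤ |L.det| * (√n)⁻¹ ^ n := by
          rw [A.abs_det_mul_toMatrix_orthonormalBasis]; gcongr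
      _ = ∏ j, (√n)⁻¹ * |L j j| := by
          rw [det_of_isLowerTriangular L hL, abs_prod, prod_mul_distrib, prod_const, card_univ,
            Fintype.card_fin, mul_comm]
      _ ≤ ∏ j, |c j + (L *ᵥ v) j| := prod_le_prod (fun j _ => by positivity) fun j _ => hLv j
      _ = |∏ j, (c + WithLp.toLp 2 (L *ᵥ v)) j| := by simp [abs_prod]

/-- Lemma 2: an `n`-dimensional ellipsoid `E = c + A[Bⁿ]` (not necessarily centered at the
origin) of volume `V·bₙ` intersects the set
`H_V = {z ∈ ℝⁿ : |∏ j, z j| ≥ V · n^{-n/2}}`. -/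
theorem stmt2 (n : ℕ) (hn : 0 < n) (A : Matrix (Fin n) (Fin n) ℝ) (hA : IsUnit A.det)
    (c : EuclideanSpace ℝ (Fin n)) (E : Set (EuclideanSpace ℝ (Fin n)))
    (hE : E = (fun v => c + v) '' (Matrix.toEuclideanLin A '' Metric.closedBall 0 1))
    (V : ℝ)
    (hV : volume E =
      ENNReal.ofReal V * volume (Metric.closedBall (0 : EuclideanSpace ℝ (Fin n)) 1)) :
    (E ∩ {z : EuclideanSpace ℝ (Fin n) |
      V * (n : ℝ) ^ (-(n : ℝ) / 2) ≤ |∏ j, z j|}).Nonempty :=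
  stmt2_general n A c E hE V hV
end

section
/- Let x_1, ..., x_n be unit vectors in ℝ^n, and let λ_1, ..., λ_n denote the eigenvalues of the Gram matrix XX* = [⟨x_i, x_j⟩] (where X is the n×n matrix whose rows are the vectors x_1, ..., x_n). If all λ_j are positive, then sup over unit vectors y in ℝ^n of |⟨x_1,y⟩ ⋯ ⟨x_n,y⟩| is at least (n / (λ_1^{-1} + ⋯ + λ_n^{-1}))^{n/2} · n^{-n/2}. -/
/-! With `M = G⁻¹`, the vector `y = ∑ i, (M ε)ᵢ • xᵢ` satisfies `⟪xⱼ, y⟫ = εⱼ` and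
`‖y‖² = εᵀ M ε`. Averaged over all sign vectors `ε ∈ {±1}ⁿ`, the quadratic form `εᵀ M ε` equals
`tr M = ∑ λⱼ⁻¹`, so some sign vector gives `‖y‖² ≤ ∑ λⱼ⁻¹`. At the unit vector `y / ‖y‖` the product
`|∏ ⟪xᵢ, y / ‖y‖⟫|` is then `‖y‖⁻ⁿ ≥ (∑ λⱼ⁻¹)^(-n/2)`, which is the claimed bound. -/

open Matrix Finset

section SignVectors

variable (ι R : Type*) [Fintype ι] [DecidableEq ι] [Field R] [LinearOrder R]

def signVectors : Finset (ι → R) := Fintype.piFinset fun _ => {1, -1}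

variable {ι R}

lemma neg_update_mem_signVectors {σ : ι → R} (hσ : σ ∈ signVectors ι R) (i : ι) :
    Function.update σ i (-σ i) ∈ signVectors ι R := by
  refine Fintype.mem_piFinset.mpr fun k => ?_
  have hσ := Fintype.mem_piFinset.mp hσ
  rcases eq_or_ne k i with rfl | hk
  · have := hσ k
    simp only [mem_insert, mem_singleton, Function.update_self] at this ⊢
    rcases this with h | h <;> simp [h]
  · rw [Function.update_of_ne hk]
    exact hσ k

variable [IsStrictOrderedRing R]

lemma abs_eq_one_of_mem_signVectors {σ : ι → R} (hσ : σ ∈ signVectors ι R) (i : ι) :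
    |σ i| = 1 := by
  have := Fintype.mem_piFinset.mp hσ i
  simp only [mem_insert, mem_singleton] at this
  rcases this with h | h <;> simp [h]

lemma sum_signVectors_mul_apply (i j : ι) :
    ∑ σ ∈ signVectors ι R, σ i * σ j = if i = j then (#(signVectors ι R) : R) else 0 := by
  split_ifs with hij
  · subst hij
    rw [Finset.cast_card]
    refine sum_congr rfl fun σ hσ => ?_
    rw [← abs_mul_abs_self, abs_eq_one_of_mem_signVectors hσ, mul_one]
  · -- flipping the sign of the `i`-th coordinate is an involution negating every summand
    set flip : (ι → R) → ι → R := fun σ => Function.update σ i (-σ i)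
    have hflip : ∀ σ, flip (flip σ) = σ := fun σ => by simp [flip]
    have hneg : ∑ σ ∈ signVectors ι R, σ i * σ j = -∑ σ ∈ signVectors ι R, σ i * σ j := by
      rw [← sum_neg_distrib]
      refine sum_nbij' flip flip (fun σ hσ => neg_update_mem_signVectors hσ i)
        (fun σ hσ => neg_update_mem_signVectors hσ i) (fun σ _ => hflip σ) (fun σ _ => hflip σ)
        fun σ _ => ?_
      simp [flip, Function.update_of_ne (Ne.symm hij)]
    linarith

lemma sum_signVectors_dotProduct_mulVec (A : Matrix ι ι R) :
    ∑ σ ∈ signVectors ι R, σ ⬝ᵥ A *ᵥ σ = #(signVectors ι R) * A.trace := by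
  calc ∑ σ ∈ signVectors ι R, σ ⬝ᵥ A *ᵥ σ
      = ∑ i, ∑ j, A i j * ∑ σ ∈ signVectors ι R, σ i * σ j := by
        simp only [dotProduct, mulVec, mul_sum]
        rw [sum_comm]
        refine sum_congr rfl fun i _ => ?_
        rw [sum_comm]
        exact sum_congr rfl fun j _ => sum_congr rfl fun σ _ => by ring
    _ = #(signVectors ι R) * A.trace := by
        simp [sum_signVectors_mul_apply, trace, sum_mul, mul_comm]

lemma exists_mem_signVectors_dotProduct_mulVec_le_trace (A : Matrix ι ι R) :
    ∃ σ ∈ signVectors ι R, σ ⬝ᵥ A *ᵥ σ ≤ A.trace := by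
  refine exists_le_of_sum_le ?_ ?_
  · exact ⟨1, Fintype.mem_piFinset.mpr fun _ => mem_insert_self _ _⟩
  · rw [sum_signVectors_dotProduct_mulVec, sum_const, nsmul_eq_mul]

end SignVectors

namespace Matrix.IsHermitian

variable {𝕜 n : Type*} [RCLike 𝕜] [Fintype n] [DecidableEq n] {A : Matrix n n 𝕜}

lemma inv_eq_conj_diagonal (hA : A.IsHermitian) (h : ∀ i, hA.eigenvalues i ≠ 0) :
    A⁻¹ = (hA.eigenvectorUnitary : Matrix n n 𝕜) *
      diagonal (fun i => ((hA.eigenvalues i)⁻¹ : 𝕜)) *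
        star (hA.eigenvectorUnitary : Matrix n n 𝕜) := by
  set U : Matrix n n 𝕜 := (hA.eigenvectorUnitary : Matrix n n 𝕜)
  refine inv_eq_right_inv ?_
  have hUU : star U * U = 1 := Unitary.coe_star_mul_self _
  have hUU' : U * star U = 1 := Unitary.coe_mul_star_self _
  have hspec : A = U * diagonal (RCLike.ofReal ∘ hA.eigenvalues) * star U :=
    hA.spectral_theorem.trans (Unitary.conjStarAlgAut_apply _ _)
  calc A * (U * diagonal (fun i => ((hA.eigenvalues i)⁻¹ : 𝕜)) * star U)
      = U * (diagonal (RCLike.ofReal ∘ hA.eigenvalues) * (star U * U) *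
          diagonal (fun i => ((hA.eigenvalues i)⁻¹ : 𝕜))) * star U := by
        rw [congrArg (· * _) hspec]; simp only [Matrix.mul_assoc]
    _ = 1 := by
        rw [hUU, Matrix.mul_one, diagonal_mul_diagonal]
        simp [h, hUU']

lemma trace_inv (hA : A.IsHermitian) (h : ∀ i, hA.eigenvalues i ≠ 0) :
    A⁻¹.trace = ∑ i, ((hA.eigenvalues i)⁻¹ : 𝕜) := by
  rw [hA.inv_eq_conj_diagonal h, trace_mul_cycle, Unitary.coe_star_mul_self, Matrix.one_mul,
    trace_diagonal]

lemma mul_inv_cancel (hA : A.IsHermitian) (h : ∀ i, hA.eigenvalues i ≠ 0) : A * A⁻¹ = 1 :=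
  mul_nonsing_inv A <| by simp [hA.det_eq_prod_eigenvalues, prod_ne_zero_iff, h]

end Matrix.IsHermitian

section InnerProductSpace

variable {ι E : Type*} [Fintype ι] [NormedAddCommGroup E] [InnerProductSpace ℝ E]

lemma inner_sum_smul_eq_gram_mulVec (x : ι → E) (c : ι → ℝ) (j : ι) :
    inner ℝ (x j) (∑ i, c i • x i) = (gram ℝ x *ᵥ c) j := by
  simp [inner_sum, real_inner_smul_right, mulVec, dotProduct, gram_apply, mul_comm]

lemma exists_inner_eq_of_gram_mul_eq_one [DecidableEq ι] {x : ι → E} {M : Matrix ι ι ℝ}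
    (hM : gram ℝ x * M = 1) (v : ι → ℝ) :
    ∃ y : E, (∀ j, inner ℝ (x j) y = v j) ∧ ‖y‖ ^ 2 = v ⬝ᵥ M *ᵥ v := by
  have hinner : ∀ j, inner ℝ (x j) (∑ i, (M *ᵥ v) i • x i) = v j := fun j => by
    rw [inner_sum_smul_eq_gram_mulVec, mulVec_mulVec, hM, one_mulVec]
  refine ⟨∑ i, (M *ᵥ v) i • x i, hinner, ?_⟩
  rw [← real_inner_self_eq_norm_sq, ← star_dotProduct_gram_mulVec, star_trivial, mulVec_mulVec,
    hM, one_mulVec, dotProduct_comm]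

lemma abs_prod_inner_le_prod_norm (x : ι → E) {y : E} (hy : ‖y‖ = 1) :
    |∏ i, inner ℝ (x i) y| ≤ ∏ i, ‖x i‖ := by
  rw [abs_prod]
  refine prod_le_prod (fun i _ => abs_nonneg _) fun i _ => ?_
  simpa [hy] using abs_real_inner_le_norm (x i) y

lemma abs_prod_inner_div_norm_pow_le_iSup (x : ι → E) {y : E} (hy : y ≠ 0) :
    |∏ i, inner ℝ (x i) y| / ‖y‖ ^ Fintype.card ι ≤
      ⨆ z : Metric.sphere (0 : E) 1, |∏ i, inner ℝ (x i) (z : E)| := by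
  have hbdd : BddAbove
      (Set.range fun z : Metric.sphere (0 : E) 1 => |∏ i, inner ℝ (x i) (z : E)|) :=
    ⟨∏ i, ‖x i‖, Set.forall_mem_range.mpr fun z =>
      abs_prod_inner_le_prod_norm x (mem_sphere_zero_iff_norm.mp z.2)⟩
  have hy' : 0 < ‖y‖ := norm_pos_iff.mpr hy
  have hz : ‖y‖⁻¹ • y ∈ Metric.sphere (0 : E) 1 := by
    simp [norm_smul, hy'.ne']
  refine le_of_eq_of_le ?_ (le_ciSup hbdd ⟨_, hz⟩)
  simp [real_inner_smul_right, prod_mul_distrib, abs_mul, div_eq_inv_mul]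

end InnerProductSpace

lemma div_rpow_mul_rpow_neg {a b : ℝ} (ha : 0 < a) (hb : 0 ≤ b) (p : ℝ) :
    (a / b) ^ p * a ^ (-p) = b ^ (-p) := by
  rw [Real.div_rpow ha.le hb, Real.rpow_neg ha.le, Real.rpow_neg hb]
  field_simp [(Real.rpow_pos_of_pos ha p).ne']

theorem stmt4_general (n : ℕ) (hn : 0 < n) (x : Fin n → EuclideanSpace ℝ (Fin n))
    (G : Matrix (Fin n) (Fin n) ℝ)
    (hGdef : G = Matrix.of fun i j => (inner ℝ (x i) (x j) : ℝ))
    (hG : G.IsHermitian)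
    (hpos : ∀ j, 0 < hG.eigenvalues j) :
    (⨆ y : Metric.sphere (0 : EuclideanSpace ℝ (Fin n)) 1,
        |∏ i, (inner ℝ (x i) (y : EuclideanSpace ℝ (Fin n)) : ℝ)|) ≥
      ((n : ℝ) / ∑ j, (hG.eigenvalues j)⁻¹) ^ ((n : ℝ) / 2) * (n : ℝ) ^ (-(n : ℝ) / 2) := by
  have hne : ∀ j, hG.eigenvalues j ≠ 0 := fun j => (hpos j).ne'
  have hGinv : gram ℝ x * G⁻¹ = 1 := hGdef ▸ hG.mul_inv_cancel hne
  obtain ⟨σ, hσ, hσG⟩ := exists_mem_signVectors_dotProduct_mulVec_le_trace G⁻¹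
  obtain ⟨y, hxy, hy⟩ := exists_inner_eq_of_gram_mul_eq_one hGinv σ
  have hy0 : y ≠ 0 := by
    rintro rfl
    simpa [← hxy] using abs_eq_one_of_mem_signVectors hσ ⟨0, hn⟩
  have hyT : ‖y‖ ^ 2 ≤ ∑ j, (hG.eigenvalues j)⁻¹ := by
    simpa [hy, hG.trace_inv hne] using hσG
  have hT : 0 ≤ ∑ j, (hG.eigenvalues j)⁻¹ := sum_nonneg fun j _ => (inv_pos.mpr (hpos j)).le
  have hprod : |∏ i, inner ℝ (x i) y| = 1 := by
    simp [abs_prod, hxy, abs_eq_one_of_mem_signVectors hσ]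
  calc ((n : ℝ) / ∑ j, (hG.eigenvalues j)⁻¹) ^ ((n : ℝ) / 2) * (n : ℝ) ^ (-(n : ℝ) / 2)
      = (∑ j, (hG.eigenvalues j)⁻¹) ^ (-((n : ℝ) / 2)) := by
        rw [neg_div, div_rpow_mul_rpow_neg (by exact_mod_cast hn) hT]
    _ ≤ (‖y‖ ^ 2) ^ (-((n : ℝ) / 2)) :=
        Real.rpow_le_rpow_of_nonpos (pow_pos (norm_pos_iff.mpr hy0) 2) hyT
          (neg_nonpos.mpr (by positivity))
    _ = |∏ i, inner ℝ (x i) y| / ‖y‖ ^ n := by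
        rw [hprod, Real.rpow_neg (by positivity), ← Real.rpow_natCast,
          ← Real.rpow_mul (norm_nonneg y), one_div, Nat.cast_ofNat, mul_div_cancel₀ _ two_ne_zero,
          Real.rpow_natCast]
    _ ≤ _ := by simpa using abs_prod_inner_div_norm_pow_le_iSup x hy0

/-- If `x 1, ..., x n` are unit vectors in `ℝⁿ` and the eigenvalues `λ_j` of the Gram matrix
`[⟨x i, x j⟩]` are all positive, then the supremum over unit vectors `y` of
`|⟨x 1, y⟩ ⋯ ⟨x n, y⟩|` is at least `(n / (λ_1⁻¹ + ⋯ + λ_n⁻¹))^{n/2} · n^{-n/2}`. -/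
theorem stmt4 (n : ℕ) (hn : 0 < n) (x : Fin n → EuclideanSpace ℝ (Fin n))
    (hx : ∀ i, ‖x i‖ = 1)
    (G : Matrix (Fin n) (Fin n) ℝ)
    (hGdef : G = Matrix.of fun i j => (inner ℝ (x i) (x j) : ℝ))
    (hG : G.IsHermitian)
    (hpos : ∀ j, 0 < hG.eigenvalues j) :
    (⨆ y : Metric.sphere (0 : EuclideanSpace ℝ (Fin n)) 1,
        |∏ i, (inner ℝ (x i) (y : EuclideanSpace ℝ (Fin n)) : ℝ)|) ≥
      ((n : ℝ) / ∑ j, (hG.eigenvalues j)⁻¹) ^ ((n : ℝ) / 2) * (n : ℝ) ^ (-(n : ℝ) / 2) :=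
  stmt4_general n hn x G hGdef hG hpos
end

section
/- Let x_1, ..., x_n be unit vectors in ℝ^n, and let λ_1 denote the smallest eigenvalue of the Gram matrix XX* = [⟨x_i, x_j⟩]. Then there exists a unit vector y in ℝ^n such that |⟨x_1,y⟩ · ⟨x_2,y⟩ ⋯ ⟨x_n,y⟩| ≥ (λ_1/n)^{n/2}. -/
/-!
Since `G ≥ λ₁ • 1`, the synthesis map `c ↦ ∑ cᵢ xᵢ` satisfies `λ₁ ‖c‖² ≤ ‖∑ cᵢ xᵢ‖²`. For
`λ₁ > 0` the `xᵢ` are therefore independent and there is `y = ∑ cᵢ xᵢ` with `⟪xᵢ, y⟫ = 1` for all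
`i` (take `c = G⁻¹ 𝟙`). Then `‖y‖² = ∑ cᵢ ≤ √n ‖c‖ ≤ √n ‖y‖ / √λ₁`, i.e. `‖y‖² ≤ n / λ₁`, and the
unit vector `y / ‖y‖` has `|∏ ⟪xᵢ, y / ‖y‖⟫| = ‖y‖⁻ⁿ ≥ (λ₁ / n) ^ (n / 2)`.
-/

open Matrix
open scoped MatrixOrder

theorem Matrix.IsHermitian.mul_dotProduct_self_le_dotProduct_mulVec {n : Type*} [Fintype n]
    [DecidableEq n] {A : Matrix n n ℝ} (hA : A.IsHermitian) {l : ℝ}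
    (hl : ∀ i, l ≤ hA.eigenvalues i) (c : n → ℝ) : l * (c ⬝ᵥ c) ≤ c ⬝ᵥ A *ᵥ c := by
  have hle : algebraMap ℝ (Matrix n n ℝ) l ≤ A := by
    rw [algebraMap_le_iff_le_spectrum (a := A) hA, hA.spectrum_real_eq_range_eigenvalues]
    rintro _ ⟨i, rfl⟩
    exact hl i
  simpa [Algebra.algebraMap_eq_smul_one, sub_mulVec, dotProduct_sub, smul_mulVec,
    dotProduct_smul] using (Matrix.le_iff.mp hle).dotProduct_mulVec_nonneg c

section

variable {ι E : Type*} [Fintype ι] [NormedAddCommGroup E] [InnerProductSpace ℝ E]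

theorem Matrix.dotProduct_gram_mulVec_self (x : ι → E) (c : ι → ℝ) :
    c ⬝ᵥ gram ℝ x *ᵥ c = ‖∑ i, c i • x i‖ ^ 2 := by
  simpa using star_dotProduct_gram_mulVec x c c

theorem Matrix.gram_mulVec_apply (x : ι → E) (c : ι → ℝ) (j : ι) :
    (gram ℝ x *ᵥ c) j = inner ℝ (x j) (∑ i, c i • x i) := by
  simp [mulVec, dotProduct, inner_sum, real_inner_smul_right, mul_comm]

theorem LinearIndependent.exists_forall_inner_sum_smul_eq [DecidableEq ι] {x : ι → E}
    (hx : LinearIndependent ℝ x) (t : ι → ℝ) :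
    ∃ c : ι → ℝ, ∀ j, inner ℝ (x j) (∑ i, c i • x i) = t j := by
  have hG : IsUnit (gram ℝ x) := (posDef_gram_of_linearIndependent hx).isUnit
  refine ⟨(gram ℝ x)⁻¹ *ᵥ t, fun j => ?_⟩
  rw [← gram_mulVec_apply, mulVec_mulVec, mul_nonsing_inv _ ((isUnit_iff_isUnit_det _).mp hG),
    one_mulVec]

variable {l : ℝ} {x : ι → E}

theorem linearIndependent_of_mul_dotProduct_self_le (hl : 0 < l)
    (h : ∀ c : ι → ℝ, l * (c ⬝ᵥ c) ≤ ‖∑ i, c i • x i‖ ^ 2) : LinearIndependent ℝ x := by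
  rw [Fintype.linearIndependent_iff]
  intro c hc
  have hcc : c ⬝ᵥ c ≤ 0 := by
    have hlc := h c
    rw [hc, norm_zero] at hlc
    nlinarith
  have hnonneg : 0 ≤ c ⬝ᵥ c := Finset.sum_nonneg fun i _ => mul_self_nonneg (c i)
  exact congrFun <| dotProduct_self_eq_zero.mp (le_antisymm hcc hnonneg)

theorem mul_norm_sq_le_card_of_forall_inner_eq_one
    (h : ∀ c : ι → ℝ, l * (c ⬝ᵥ c) ≤ ‖∑ i, c i • x i‖ ^ 2) {c : ι → ℝ}
    (hc : ∀ j, inner ℝ (x j) (∑ i, c i • x i) = 1) :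
    l * ‖∑ i, c i • x i‖ ^ 2 ≤ Fintype.card ι := by
  have hnorm : ‖∑ i, c i • x i‖ ^ 2 = ∑ i, c i := by
    rw [← real_inner_self_eq_norm_sq, sum_inner]
    simp [real_inner_smul_left, hc]
  have hcs : (∑ i, c i) ^ 2 ≤ Fintype.card ι * (c ⬝ᵥ c) := by
    simpa [dotProduct, sq] using sq_sum_le_card_mul_sum_sq (s := Finset.univ) (f := c)
  have hlc := h c
  rw [hnorm] at hlc ⊢
  set s := ∑ i, c i
  have hs : 0 ≤ s := hnorm ▸ sq_nonneg _
  rcases le_or_gt l 0 with hl | hl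
  · exact (mul_nonpos_of_nonpos_of_nonneg hl hs).trans (Nat.cast_nonneg _)
  · have : l * s * s ≤ Fintype.card ι * s :=
      calc l * s * s = l * s ^ 2 := by ring
        _ ≤ l * (Fintype.card ι * (c ⬝ᵥ c)) := mul_le_mul_of_nonneg_left hcs hl.le
        _ = Fintype.card ι * (l * (c ⬝ᵥ c)) := by ring
        _ ≤ Fintype.card ι * s := mul_le_mul_of_nonneg_left hlc (Nat.cast_nonneg _)
    rcases hs.eq_or_lt with hs0 | hspos
    · rw [← hs0, mul_zero]
      exact Nat.cast_nonneg _
    · exact le_of_mul_le_mul_right this hspos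

theorem exists_forall_inner_eq_one_mul_norm_sq_le [DecidableEq ι] (hl : 0 < l)
    (h : ∀ c : ι → ℝ, l * (c ⬝ᵥ c) ≤ ‖∑ i, c i • x i‖ ^ 2) :
    ∃ y : E, (∀ i, inner ℝ (x i) y = 1) ∧ l * ‖y‖ ^ 2 ≤ Fintype.card ι := by
  obtain ⟨c, hc⟩ :=
    (linearIndependent_of_mul_dotProduct_self_le hl h).exists_forall_inner_sum_smul_eq 1
  exact ⟨_, hc, mul_norm_sq_le_card_of_forall_inner_eq_one h hc⟩

theorem exists_norm_eq_one_rpow_le_abs_prod_inner [Nonempty ι] (hl : 0 ≤ l) {y : E}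
    (hxy : ∀ i, inner ℝ (x i) y = 1) (hly : l * ‖y‖ ^ 2 ≤ Fintype.card ι) :
    ∃ u : E, ‖u‖ = 1 ∧
      (l / Fintype.card ι) ^ ((Fintype.card ι : ℝ) / 2) ≤ |∏ i, inner ℝ (x i) u| := by
  have hy : y ≠ 0 := by
    rintro rfl
    simpa using hxy (Classical.arbitrary ι)
  refine ⟨‖y‖⁻¹ • y, norm_smul_inv_norm hy, ?_⟩
  have hprod : ∏ i, inner ℝ (x i) (‖y‖⁻¹ • y) = ‖y‖⁻¹ ^ Fintype.card ι := by
    simp [real_inner_smul_right, hxy]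
  have hsqrt : √(l / Fintype.card ι) ≤ ‖y‖⁻¹ := by
    have hy' : 0 < ‖y‖ := norm_pos_iff.mpr hy
    rw [Real.sqrt_le_left (by positivity), inv_pow, div_le_iff₀ (by positivity),
      ← div_eq_inv_mul, le_div_iff₀ (by positivity)]
    exact hly
  rw [hprod, Real.rpow_div_two_eq_sqrt _ (by positivity), Real.rpow_natCast,
    abs_of_nonneg (by positivity)]
  exact pow_le_pow_left₀ (Real.sqrt_nonneg _) hsqrt _

end

theorem stmt5_general (n : ℕ) (hn : 0 < n) (x : Fin n → EuclideanSpace ℝ (Fin n))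
    (G : Matrix (Fin n) (Fin n) ℝ)
    (hGdef : G = Matrix.of fun i j => (inner ℝ (x i) (x j) : ℝ))
    (hG : G.IsHermitian)
    (lam1 : ℝ) (hlam1 : IsLeast (Set.range hG.eigenvalues) lam1) :
    ∃ y : EuclideanSpace ℝ (Fin n), ‖y‖ = 1 ∧
      (lam1 / n) ^ ((n : ℝ) / 2) ≤ |∏ i, (inner ℝ (x i) y : ℝ)| := by
  subst hGdef
  have : NeZero n := ⟨hn.ne'⟩
  have hbound (c : Fin n → ℝ) : lam1 * (c ⬝ᵥ c) ≤ ‖∑ i, c i • x i‖ ^ 2 :=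
    dotProduct_gram_mulVec_self x c ▸
      hG.mul_dotProduct_self_le_dotProduct_mulVec (fun i => hlam1.2 ⟨i, rfl⟩) c
  have hlam0 : 0 ≤ lam1 := by
    obtain ⟨i, rfl⟩ := hlam1.1
    exact (posSemidef_gram ℝ x).eigenvalues_nonneg i
  rcases hlam0.eq_or_lt with rfl | hpos
  · exact ⟨EuclideanSpace.single 0 1, by simp, by simp [Real.zero_rpow, hn.ne']⟩
  · obtain ⟨y, hxy, hly⟩ := exists_forall_inner_eq_one_mul_norm_sq_le hpos hbound
    simpa using exists_norm_eq_one_rpow_le_abs_prod_inner hpos.le hxy (by simpa using hly)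

/-- Marcus' estimate: if `x 1, ..., x n` are unit vectors in `ℝⁿ` and `λ₁` is the smallest
eigenvalue of the Gram matrix `[⟨x i, x j⟩]`, then there exists a unit vector `y` with
`|⟨x 1, y⟩ ⋯ ⟨x n, y⟩| ≥ (λ₁/n)^{n/2}`. -/
theorem stmt5 (n : ℕ) (hn : 0 < n) (x : Fin n → EuclideanSpace ℝ (Fin n))
    (hx : ∀ i, ‖x i‖ = 1)
    (G : Matrix (Fin n) (Fin n) ℝ)
    (hGdef : G = Matrix.of fun i j => (inner ℝ (x i) (x j) : ℝ))
    (hG : G.IsHermitian)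
    (lam1 : ℝ) (hlam1 : IsLeast (Set.range hG.eigenvalues) lam1) :
    ∃ y : EuclideanSpace ℝ (Fin n), ‖y‖ = 1 ∧
      (lam1 / n) ^ ((n : ℝ) / 2) ≤ |∏ i, (inner ℝ (x i) y : ℝ)| :=
  stmt5_general n hn x G hGdef hG lam1 hlam1
end
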